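/- arXiv:1111.5484 — 5 statements merged into one kernel-verified Lean document; each statement's English description precedes it below -/
import Mathlib

section
/- Let k ≥ 2 and let n be an integer with 2^{k−1} < n ≤ 2^k − 1. Then the codes S_{n,k} and D_{n,k} are equivalent, i.e., there exists a permutation π of the n coordinate positions such that D_{n,k} = {(c_{π(1)},…,c_{π(n)}) : (c_1,…,c_n) ∈ S_{n,k}}. -/
open Finset

/-- The value of column `j` (0-indexed) of the matrix
`H_k = [H_k^(k-1) | H_k^(k-2) | … | H_k^(0)]`, read as a `k`-bit integer with
row 1 as the most significant bit.  (Column `c` of the block `H_k^(m)` is the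
vector `(0,…,0,1,binary_m(c))`, i.e. the integer `2^m + c`; the block `H_k^(m)`
occupies global columns `[2^k - 2^(m+1), 2^k - 2^m)`, so that
`m = ⌊log₂ (2^k - 1 - j)⌋` and the value is `3·2^m + j - 2^k`.) -/
def colVal (k j : ℕ) : ℕ := 3 * 2 ^ Nat.log2 (2 ^ k - 1 - j) + j - 2 ^ k

/-- Row `i` (1-indexed, `1 ≤ i ≤ k`) of the matrix `H_k(n)` consisting of the
first `n` columns of `H_k`. -/
def Hrow (k n : ℕ) (i : ℕ) : Fin n → ZMod 2 :=
  fun j => if Nat.testBit (colVal k j) (k - i) then 1 else 0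

/-- The code `S_{n,k}`: the binary linear code spanned by the rows of `H_k(n)`. -/
def SCode (k n : ℕ) : Submodule (ZMod 2) (Fin n → ZMod 2) :=
  Submodule.span (ZMod 2) (Set.range fun i : Fin k => Hrow k n ((i : ℕ) + 1))

/-- `w_i`: the Hamming weight of the `i`-th (1-indexed) row of `H_k(n)`. -/
def rowWt (k n i : ℕ) : ℕ := hammingNorm (Hrow k n i)

/-- `α_i`: the `i`-th entry (1-indexed) of the last (`n`-th) column of `H_k(n)`;
`true` encodes `1` and `false` encodes `0`. -/
def alphaBit (k n i : ℕ) : Bool := Nat.testBit (colVal k (n - 1)) (k - i)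

/-- Row `i` (1-indexed) of the matrix `M_{n,k}`, whose `j`-th column
(0-indexed) is the `k`-bit binary representation of `2^k - 1 - j`, MSB first. -/
def Mrow (k n : ℕ) (i : ℕ) : Fin n → ZMod 2 :=
  fun j => if Nat.testBit (2 ^ k - 1 - (j : ℕ)) (k - i) then 1 else 0

/-- The code `D_{n,k}`: the binary linear code spanned by the rows of `M_{n,k}`. -/
def DCode (k n : ℕ) : Submodule (ZMod 2) (Fin n → ZMod 2) :=
  Submodule.span (ZMod 2) (Set.range fun i : Fin k => Mrow k n ((i : ℕ) + 1))

/-- The value of column `j` (0-indexed) of the generalized matrix consisting of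
`t-1` copies of `H_k^(k-1)` followed by `H_k(n')`, where `n = 2^(k-1)·(t-1) + n'`
with `2^(k-1) ≤ n' ≤ 2^k - 1` (so `t - 1 = (n - 2^(k-1)) / 2^(k-1)`). -/
def gcolVal (k n j : ℕ) : ℕ :=
  if j < (n - 2 ^ (k - 1)) / 2 ^ (k - 1) * 2 ^ (k - 1) then
    2 ^ (k - 1) + j % 2 ^ (k - 1)
  else colVal k (j - (n - 2 ^ (k - 1)) / 2 ^ (k - 1) * 2 ^ (k - 1))

/-- The generalized code `S_{n,k}`, defined for every `n ≥ 2^(k-1)`: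
the span of the rows of the `k × n` matrix obtained by concatenating `t-1`
copies of `H_k^(k-1)` followed by `H_k(n')`. -/
def GSCode (k n : ℕ) : Submodule (ZMod 2) (Fin n → ZMod 2) :=
  Submodule.span (ZMod 2)
    (Set.range fun i : Fin k => fun j : Fin n =>
      if Nat.testBit (gcolVal k n (j : ℕ)) (k - ((i : ℕ) + 1)) then (1 : ZMod 2) else 0)

/-- The minimum distance of a binary linear code: the least Hamming weight of a
nonzero codeword. -/
noncomputable def minDist {n : ℕ} (C : Submodule (ZMod 2) (Fin n → ZMod 2)) : ℕ :=
  sInf {w | ∃ c ∈ C, c ≠ 0 ∧ hammingNorm c = w}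

/-- `A_w`: the number of codewords of `C` of Hamming weight `w`. -/
noncomputable def numWt {n : ℕ} (C : Submodule (ZMod 2) (Fin n → ZMod 2)) (w : ℕ) : ℕ :=
  Set.ncard {c : Fin n → ZMod 2 | c ∈ C ∧ hammingNorm c = w}

/-- The undetected error probability
`P_ue(C,p) = Σ_{w=1}^n A_w p^w (1-p)^(n-w)`. -/
noncomputable def Pue {n : ℕ} (C : Submodule (ZMod 2) (Fin n → ZMod 2)) (p : ℝ) : ℝ :=
  ∑ w ∈ Finset.Icc 1 n, (numWt C w : ℝ) * p ^ w * (1 - p) ^ (n - w)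

/-- A code is proper if `p ↦ P_ue(C,p)` is monotonically increasing on `[0, 1/2]`. -/
def IsProper {n : ℕ} (C : Submodule (ZMod 2) (Fin n → ZMod 2)) : Prop :=
  MonotoneOn (Pue C) (Set.Icc (0 : ℝ) (1 / 2))

/-- An `[n,k]` code is satisfactory if `P_ue(C,p) ≤ 2^(k-n)` for all `p ∈ [0,1/2]`. -/
def IsSatisfactory (k : ℕ) {n : ℕ} (C : Submodule (ZMod 2) (Fin n → ZMod 2)) : Prop :=
  ∀ p ∈ Set.Icc (0 : ℝ) (1 / 2), Pue C p ≤ (2 : ℝ) ^ ((k : ℤ) - (n : ℤ))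

/-- The binary entropy function `h(x) = -x log₂ x - (1-x) log₂ (1-x)`. -/
noncomputable def binEnt (x : ℝ) : ℝ :=
  -(x * Real.logb 2 x) - (1 - x) * Real.logb 2 (1 - x)

/-- `U_m = (2^(m+2) - 3)·(1 - h((2^(m+1) - 2)/(2^(m+2) - 3)))`. -/
noncomputable def Ufun (m : ℕ) : ℝ :=
  ((2 : ℝ) ^ (m + 2) - 3) * (1 - binEnt (((2 : ℝ) ^ (m + 1) - 2) / ((2 : ℝ) ^ (m + 2) - 3)))


/-!
Read the columns of both matrices as `k`-bit numbers. With `d = 2^k - n` and `s = ⌊log₂ d⌋`,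
the columns of `M_{n,k}` are the numbers `d, …, 2^k - 1`, while `H_k(n)` misses exactly the last
`d - 1` columns of `H_k`: the numbers below `2^s` and the top `d - 2^s` numbers of
`[2^s, 2^(s+1))`. Complementing the bits below `s` of every number whose bit `s` is set maps the
first set bijectively onto the second (it reflects `[2^s, 2^(s+1))` and permutes `[2^(s+1), 2^k)`),
and on the rows it is the elementary operation adding the row of bit `s` to the rows of the lower
bits, so it does not change the row space.
-/

def flipLowBits (s x : ℕ) : ℕ := x ^^^ if x.testBit s then 2 ^ s - 1 else 0

theorem testBit_flipLowBits (s x b : ℕ) :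
    (flipLowBits s x).testBit b = (x.testBit b ^^ (decide (b < s) && x.testBit s)) := by
  unfold flipLowBits
  split_ifs with h <;> simp [h]

theorem flipLowBits_flipLowBits (s x : ℕ) : flipLowBits s (flipLowBits s x) = x :=
  Nat.eq_of_testBit_eq fun b => by
    simp only [testBit_flipLowBits, lt_irrefl, decide_false, Bool.false_and, Bool.xor_false,
      Bool.xor_assoc, Bool.xor_self]

theorem flipLowBits_div_two_pow (s x : ℕ) : flipLowBits s x / 2 ^ s = x / 2 ^ s :=
  Nat.eq_of_testBit_eq fun b => by simp [Nat.testBit_div_two_pow, testBit_flipLowBits]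

theorem flipLowBits_add_self {s x : ℕ} (h₁ : 2 ^ s ≤ x) (h₂ : x < 2 ^ (s + 1)) :
    flipLowBits s x + x = 3 * 2 ^ s - 1 := by
  have hpow : 2 ^ (s + 1) = 2 * 2 ^ s := by ring
  have hdiv : x / 2 ^ s = 1 := Nat.div_eq_of_lt_le (by omega) (by omega)
  have hbit : x.testBit s = true := by
    rw [Nat.testBit_eq_decide_div_mod_eq, hdiv]; rfl
  have hmod : flipLowBits s x % 2 ^ s = 2 ^ s - (x % 2 ^ s + 1) :=
    Nat.eq_of_testBit_eq fun b => by
      rw [Nat.testBit_two_pow_sub_succ (Nat.mod_lt _ (by positivity))]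
      by_cases hb : b < s <;> simp [testBit_flipLowBits, hbit, hb]
  have hx := Nat.div_add_mod x (2 ^ s)
  have hy := Nat.div_add_mod (flipLowBits s x) (2 ^ s)
  rw [flipLowBits_div_two_pow, hdiv, hmod] at hy
  rw [hdiv] at hx
  have := Nat.mod_lt x (show 0 < 2 ^ s by positivity)
  omega

theorem Nat.log2_eq_of_div_two_pow_eq {s x y : ℕ} (hx : 2 ^ s ≤ x) (h : x / 2 ^ s = y / 2 ^ s) :
    x.log2 = y.log2 := by
  have hy : 2 ^ s ≤ y := by
    rw [← Nat.one_le_div_iff (by positivity), ← h, Nat.one_le_div_iff (by positivity)]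
    exact hx
  have hxs := Nat.le_log_of_pow_le one_lt_two hx
  have hys := Nat.le_log_of_pow_le one_lt_two hy
  have hdiv := Nat.log_div_base_pow 2 x s
  rw [h, Nat.log_div_base_pow] at hdiv
  rw [Nat.log2_eq_log_two, Nat.log2_eq_log_two]
  omega

def colIdx (k y : ℕ) : ℕ := y + 2 ^ k - 3 * 2 ^ y.log2

theorem colVal_colIdx {k y : ℕ} (hy₀ : y ≠ 0) (hy : y < 2 ^ k) : colVal k (colIdx k y) = y := by
  obtain ⟨t, ht⟩ : ∃ t, y.log2 = t := ⟨_, rfl⟩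
  have hidx : colIdx k y = y + 2 ^ k - 3 * 2 ^ t := by rw [colIdx, ht]
  have hty := (Nat.log2_eq_iff hy₀).1 ht
  have htk : 2 ^ (t + 1) ≤ 2 ^ k := Nat.pow_le_pow_right two_pos (ht ▸ (Nat.log2_lt hy₀).2 hy)
  have hpow : 2 ^ (t + 1) = 2 * 2 ^ t := by ring
  have hrev : 2 ^ k - 1 - colIdx k y = 3 * 2 ^ t - 1 - y := by omega
  have hlog : (3 * 2 ^ t - 1 - y).log2 = t := (Nat.log2_eq_iff (by omega)).2 ⟨by omega, by omega⟩
  rw [colVal, hrev, hlog, hidx]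
  omega

theorem exists_lt_colVal_eq_flipLowBits {k s d x : ℕ} (hd₁ : 2 ^ s ≤ d) (hd₂ : d < 2 ^ (s + 1))
    (hdx : d ≤ x) (hx : x < 2 ^ k) : ∃ j < 2 ^ k - d, colVal k j = flipLowBits s x := by
  set t := x.log2
  have hx₀ : x ≠ 0 := by have := Nat.one_le_two_pow (n := s); omega
  have ht : 2 ^ t ≤ x ∧ x < 2 ^ (t + 1) := (Nat.log2_eq_iff hx₀).1 rfl
  have htk : 2 ^ (t + 1) ≤ 2 ^ k := Nat.pow_le_pow_right two_pos ((Nat.log2_lt hx₀).2 hx)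
  have hst : s ≤ t := (Nat.le_log2 hx₀).2 (by omega)
  have hlog : (flipLowBits s x).log2 = t :=
    (Nat.log2_eq_of_div_two_pow_eq (by omega) (flipLowBits_div_two_pow s x).symm).symm
  have hy₀ : flipLowBits s x ≠ 0 := by
    intro h
    have hdiv := flipLowBits_div_two_pow s x
    rw [h, Nat.zero_div] at hdiv
    exact (Nat.div_pos (by omega) (by positivity)).ne hdiv
  have hy := (Nat.log2_eq_iff hy₀).1 hlog
  have hpow : 2 ^ (t + 1) = 2 * 2 ^ t := by ring
  have hsum : flipLowBits s x + d < 3 * 2 ^ t := by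
    rcases hst.lt_or_eq with hst | rfl
    · have : 2 ^ (s + 1) ≤ 2 ^ t := Nat.pow_le_pow_right two_pos hst
      omega
    · have := flipLowBits_add_self ht.1 ht.2
      omega
  refine ⟨colIdx k (flipLowBits s x), ?_, colVal_colIdx hy₀ (by omega)⟩
  unfold colIdx
  rw [hlog]
  omega

section bitCode

variable {ι ι' : Type*}

def bitRow (v : ι → ℕ) (b : ℕ) : ι → ZMod 2 :=
  fun j => if (v j).testBit b then 1 else 0

def bitCode (k : ℕ) (v : ι → ℕ) : Submodule (ZMod 2) (ι → ZMod 2) :=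
  Submodule.span (ZMod 2) (Set.range fun b : Fin k => bitRow v b)

theorem span_range_bitRow_rev (k : ℕ) (v : ι → ℕ) :
    Submodule.span (ZMod 2) (Set.range fun i : Fin k => bitRow v (k - ((i : ℕ) + 1))) =
      bitCode k v := by
  have hrev : (fun i : Fin k => bitRow v (k - ((i : ℕ) + 1))) =
      (fun b : Fin k => bitRow v b) ∘ Fin.rev := by
    funext i
    simp [Fin.val_rev]
  rw [hrev, Fin.rev_surjective.range_comp, bitCode]

theorem bitCode_map_funLeft (k : ℕ) (v : ι → ℕ) (g : ι' → ι) :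
    (bitCode k v).map (LinearMap.funLeft (ZMod 2) (ZMod 2) g) = bitCode k (v ∘ g) := by
  rw [bitCode, Submodule.map_span, ← Set.range_comp]
  rfl

theorem bitRow_flipLowBits_of_le {s b : ℕ} (v : ι → ℕ) (h : s ≤ b) :
    bitRow (flipLowBits s ∘ v) b = bitRow v b := by
  funext j
  simp [bitRow, testBit_flipLowBits, Nat.not_lt.2 h]

theorem bitRow_flipLowBits_of_lt {s b : ℕ} (v : ι → ℕ) (h : b < s) :
    bitRow (flipLowBits s ∘ v) b = bitRow v b + bitRow v s := by
  funext j
  simp only [bitRow, Function.comp_apply, testBit_flipLowBits, h, decide_true, Bool.true_and,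
    Pi.add_apply]
  cases (v j).testBit b <;> cases (v j).testBit s <;> decide

theorem bitCode_flipLowBits_le {k s : ℕ} (hs : s < k) (v : ι → ℕ) :
    bitCode k (flipLowBits s ∘ v) ≤ bitCode k v := by
  refine Submodule.span_le.2 (Set.range_subset_iff.2 fun b => ?_)
  by_cases hb : (b : ℕ) < s
  · rw [bitRow_flipLowBits_of_lt v hb]
    exact add_mem (Submodule.subset_span ⟨b, rfl⟩) (Submodule.subset_span ⟨⟨s, hs⟩, rfl⟩)
  · rw [bitRow_flipLowBits_of_le v (Nat.not_lt.1 hb)]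
    exact Submodule.subset_span ⟨b, rfl⟩

theorem bitCode_flipLowBits {k s : ℕ} (hs : s < k) (v : ι → ℕ) :
    bitCode k (flipLowBits s ∘ v) = bitCode k v := by
  refine le_antisymm (bitCode_flipLowBits_le hs v) ?_
  simpa [Function.comp_def, flipLowBits_flipLowBits] using
    bitCode_flipLowBits_le hs (flipLowBits s ∘ v)

end bitCode

theorem SCode_eq_bitCode (k n : ℕ) : SCode k n = bitCode k fun j : Fin n => colVal k j :=
  span_range_bitRow_rev k _

theorem DCode_eq_bitCode (k n : ℕ) : DCode k n = bitCode k fun j : Fin n => 2 ^ k - 1 - j :=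
  span_range_bitRow_rev k _

theorem exists_perm_colVal_eq_flipLowBits {k n : ℕ} (hn₀ : 0 < n) (hn : n ≤ 2 ^ k - 1) :
    ∃ π : Equiv.Perm (Fin n),
      ∀ j, colVal k (π j) = flipLowBits (2 ^ k - n).log2 (2 ^ k - 1 - j) := by
  set d := 2 ^ k - n
  set s := d.log2
  have hds := (Nat.log2_eq_iff (show d ≠ 0 by omega)).1 rfl
  choose g hg using fun j : Fin n =>
    exists_lt_colVal_eq_flipLowBits (k := k) (x := 2 ^ k - 1 - j) hds.1 hds.2 (by omega) (by omega)
  let f : Fin n → Fin n := fun j => ⟨g j, by have := (hg j).1; omega⟩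
  have hcol (j : Fin n) : colVal k (f j) = flipLowBits s (2 ^ k - 1 - j) := (hg j).2
  have hf : Function.Injective f := by
    intro i j hij
    have := congrArg (fun l : Fin n => flipLowBits s (colVal k l)) hij
    simp only [hcol, flipLowBits_flipLowBits] at this
    omega
  exact ⟨Equiv.ofBijective f (Finite.injective_iff_bijective.mp hf), hcol⟩

theorem stmt0_general (k n : ℕ) (hn2 : n ≤ 2 ^ k - 1) :
    ∃ π : Equiv.Perm (Fin n),
      (DCode k n : Set (Fin n → ZMod 2)) =
        (fun c : Fin n → ZMod 2 => fun i => c (π i)) ''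
          (SCode k n : Set (Fin n → ZMod 2)) := by
  rcases n.eq_zero_or_pos with rfl | hn
  · refine ⟨1, Set.ext fun c => ?_⟩
    obtain rfl := Subsingleton.elim c 0
    exact ⟨fun _ => ⟨0, zero_mem _, rfl⟩, fun _ => zero_mem _⟩
  obtain ⟨π, hπ⟩ := exists_perm_colVal_eq_flipLowBits hn hn2
  have hs : (2 ^ k - n).log2 < k := (Nat.log2_lt (by omega)).2 (by omega)
  have hcode : (SCode k n).map (LinearMap.funLeft (ZMod 2) (ZMod 2) π) = DCode k n := by
    rw [SCode_eq_bitCode, bitCode_map_funLeft, DCode_eq_bitCode,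
      ← bitCode_flipLowBits hs fun j : Fin n => 2 ^ k - 1 - j]
    exact congrArg (bitCode k) (funext hπ)
  refine ⟨π, ?_⟩
  rw [← hcode, Submodule.map_coe]
  rfl

/-- For `2 ≤ k` and `2^(k-1) < n ≤ 2^k - 1`, the codes `S_{n,k}`
and `D_{n,k}` are equivalent: there is a permutation `π` of the coordinates with
`D_{n,k} = {(c_{π(1)},…,c_{π(n)}) : c ∈ S_{n,k}}`. -/
theorem stmt0 (k n : ℕ) (hk : 2 ≤ k) (hn1 : 2 ^ (k - 1) < n) (hn2 : n ≤ 2 ^ k - 1) :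
    ∃ π : Equiv.Perm (Fin n),
      (DCode k n : Set (Fin n → ZMod 2)) =
        (fun c : Fin n → ZMod 2 => fun i => c (π i)) ''
          (SCode k n : Set (Fin n → ZMod 2)) :=
  stmt0_general k n hn2
end

section
/- Let k ≥ 2, let 1 ≤ m ≤ k−1, and let n be an integer with 2^k − 2^{k−m} < n ≤ 2^k − 2^{k−m−1}. Then: (i) w_1 = w_2 = … = w_m = 2^{k−1}; (ii) w_{m+1} = n − 2^{k−1} + 2^{k−m−1}; (iii) for each i with m+2 ≤ i ≤ k, if α_i = 0 then w_i = 2^{k−i}·⌊(n−1)/2^{k−i+1}⌋, and if α_i = 1 then w_i = n − 2^{k−i}·⌊(n−1)/2^{k−i+1}⌋ − 2^{k−i}. -/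
/-!
Read column `j` of `H_k` as the integer `colVal k j`: the block `H_k^(a)` lists `2^a, …, 2^(a+1) - 1`
in increasing order. Fix the bit `b = k - i`. Before the block `H_k^(b)`, i.e. for
`j < 2^k - 2^(b+1)`, the column and its index `j` agree in bit `b`, since both are congruent modulo
`2^(b+1)` to the position of `j` inside its block; in `H_k^(b)` bit `b` is always set, and after it
never. So `w_i` is the number of integers below `min n (2^k - 2^(b+1))` with bit `b` set (`2^b` per
period `2^(b+1)`) plus the number of columns of `H_k^(b)` among the first `n`. For `i ≥ m + 2` all
first `n` columns precede `H_k^(b)`; for `i ≤ m + 1` they reach into or beyond it.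
-/

open Finset

namespace Nat

theorem count_congr {p q : ℕ → Prop} [DecidablePred p] [DecidablePred q] {n : ℕ}
    (h : ∀ k < n, p k ↔ q k) : count p n = count q n :=
  le_antisymm (count_mono_left fun k hk => (h k hk).1)
    (count_mono_left fun k hk => (h k hk).2)

theorem count_lt_eq_min (t s : ℕ) : count (· < t) s = min s t := by
  rcases le_total s t with h | h
  · rw [min_eq_left h]
    exact count_of_forall fun k hk => hk.trans_le h
  · obtain ⟨u, rfl⟩ := exists_add_of_le h
    rw [min_eq_right h, count_add, count_of_forall fun k hk => hk,
      count_of_forall_not fun k _ => by omega, add_zero]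

theorem testBit_add_of_two_pow_dvd {u b : ℕ} (h : 2 ^ (b + 1) ∣ u) (x : ℕ) :
    (u + x).testBit b = x.testBit b := by
  obtain ⟨t, rfl⟩ := h
  rw [pow_succ, mul_assoc, testBit_mul_two_pow_add_eq]
  simp

theorem testBit_iff_two_pow_le {x b : ℕ} (hx : x < 2 ^ (b + 1)) :
    x.testBit b ↔ 2 ^ b ≤ x :=
  ⟨fun h => by_contra fun hlt => by simp [testBit_lt_two_pow (not_le.1 hlt)] at h,
    fun h => testBit_of_two_pow_le_and_two_pow_add_one_gt h hx⟩

theorem count_testBit_of_le_two_pow {b s : ℕ} (hs : s ≤ 2 ^ (b + 1)) :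
    count (fun x => x.testBit b) s = s - 2 ^ b := by
  rcases le_total s (2 ^ b) with h | h
  · rw [Nat.sub_eq_zero_of_le h]
    exact count_of_forall_not fun x hx => by simp [testBit_lt_two_pow (hx.trans_le h)]
  · obtain ⟨t, rfl⟩ := exists_add_of_le h
    rw [count_add, count_of_forall_not fun x hx => by simp [testBit_lt_two_pow hx],
      count_of_forall fun x hx => ?_]
    · omega
    · rw [testBit_two_pow_add_eq, testBit_lt_two_pow (by omega : x < 2 ^ b)]
      rfl

theorem count_testBit_add {b u : ℕ} (h : 2 ^ (b + 1) ∣ u) (s : ℕ) :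
    count (fun x => x.testBit b) (u + s) =
      count (fun x => x.testBit b) u + count (fun x => x.testBit b) s := by
  simp only [count_add, testBit_add_of_two_pow_dvd h]

theorem count_testBit_two_pow_succ_mul (b q : ℕ) :
    count (fun x => x.testBit b) (2 ^ (b + 1) * q) = 2 ^ b * q := by
  induction q with
  | zero => simp
  | succ q ih =>
    rw [mul_add_one, count_testBit_add (dvd_mul_right _ _), ih,
      count_testBit_of_le_two_pow le_rfl, pow_succ, mul_add_one (2 ^ b) q]
    omega

theorem count_testBit_two_pow_sub {b k : ℕ} (hb : b < k) :
    count (fun x => x.testBit b) (2 ^ k - 2 ^ (b + 1)) = 2 ^ (k - 1) - 2 ^ b := by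
  have hk : 2 ^ k = 2 ^ (b + 1) * 2 ^ (k - b - 1) := by rw [← pow_add]; congr 1; omega
  have hk' : 2 ^ (k - 1) = 2 ^ b * 2 ^ (k - b - 1) := by rw [← pow_add]; congr 1; omega
  rw [hk, hk', ← Nat.mul_sub_one, count_testBit_two_pow_succ_mul, Nat.mul_sub_one]

theorem count_testBit_of_pos (b : ℕ) {n : ℕ} (hn : 0 < n) :
    count (fun x => x.testBit b) n =
      if (n - 1).testBit b then n - 2 ^ b * ((n - 1) / 2 ^ (b + 1)) - 2 ^ b
      else 2 ^ b * ((n - 1) / 2 ^ (b + 1)) := by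
  have hr : (n - 1) % 2 ^ (b + 1) < 2 ^ (b + 1) := mod_lt _ (by positivity)
  have hqr := div_add_mod (n - 1) (2 ^ (b + 1))
  set q := (n - 1) / 2 ^ (b + 1)
  set r := (n - 1) % 2 ^ (b + 1)
  replace hqr : n = 2 ^ (b + 1) * q + (r + 1) := by omega
  have hbit : (n - 1).testBit b = r.testBit b := by
    rw [show n - 1 = 2 ^ (b + 1) * q + r by omega, testBit_add_of_two_pow_dvd (dvd_mul_right _ _)]
  rw [hbit, hqr, count_testBit_add (dvd_mul_right _ _), count_testBit_two_pow_succ_mul,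
    count_testBit_of_le_two_pow hr, pow_succ]
  have hq : 2 ^ b * 2 * q = 2 * (2 ^ b * q) := by ring
  split_ifs with h
  · have := (testBit_iff_two_pow_le hr).1 h
    omega
  · have := mt (testBit_iff_two_pow_le hr).2 h
    omega

end Nat

theorem colVal_block {k a c : ℕ} (ha : a < k) (hc : c < 2 ^ a) :
    colVal k (2 ^ k - 2 ^ (a + 1) + c) = 2 ^ a + c := by
  have hpow : 2 ^ (a + 1) ≤ 2 ^ k := Nat.pow_le_pow_right two_pos ha
  have h2 : 2 ^ (a + 1) = 2 * 2 ^ a := by ring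
  have hlog : Nat.log2 (2 ^ k - 1 - (2 ^ k - 2 ^ (a + 1) + c)) = a := by
    rw [Nat.log2_eq_log_two]
    apply Nat.log_eq_of_pow_le_of_lt_pow <;> omega
  rw [colVal, hlog]
  omega

theorem exists_block {k j : ℕ} (hj : j < 2 ^ k - 1) :
    ∃ a c, a < k ∧ c < 2 ^ a ∧ j = 2 ^ k - 2 ^ (a + 1) + c := by
  obtain ⟨x, hx⟩ : ∃ x, x = 2 ^ k - 1 - j := ⟨_, rfl⟩
  have hlo : 2 ^ Nat.log 2 x ≤ x := Nat.pow_log_le_self 2 (by omega)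
  have hhi : x < 2 ^ (Nat.log 2 x + 1) := Nat.lt_pow_succ_log_self one_lt_two x
  have h2 : 2 ^ (Nat.log 2 x + 1) = 2 * 2 ^ Nat.log 2 x := pow_succ' 2 _
  have hlog : Nat.log 2 x < k := (Nat.pow_lt_pow_iff_right one_lt_two).1 (by omega)
  have hk : 2 ^ (Nat.log 2 x + 1) ≤ 2 ^ k := Nat.pow_le_pow_right two_pos hlog
  exact ⟨Nat.log 2 x, 2 ^ (Nat.log 2 x + 1) - 1 - x, hlog, by omega, by omega⟩

theorem testBit_colVal_of_lt {k b j : ℕ} (hj : j < 2 ^ k - 2 ^ (b + 1)) :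
    (colVal k j).testBit b = j.testBit b := by
  have hb : 1 < 2 ^ (b + 1) := Nat.one_lt_two_pow (Nat.succ_ne_zero b)
  obtain ⟨a, c, ha, hc, rfl⟩ := exists_block (by omega : j < 2 ^ k - 1)
  have hba : b < a := by
    by_contra! hab
    have : 2 ^ (a + 1) ≤ 2 ^ (b + 1) := Nat.pow_le_pow_right two_pos (by omega)
    omega
  have hdvd : 2 ^ (b + 1) ∣ 2 ^ k - 2 ^ (a + 1) :=
    Nat.dvd_sub (Nat.pow_dvd_pow 2 (by omega)) (Nat.pow_dvd_pow 2 (by omega))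
  rw [colVal_block ha hc, Nat.testBit_two_pow_add_gt hba, Nat.testBit_add_of_two_pow_dvd hdvd]

theorem testBit_colVal_of_le {k b j : ℕ} (hb : b < k) (hj₁ : 2 ^ k - 2 ^ (b + 1) ≤ j)
    (hj₂ : j < 2 ^ k - 1) : (colVal k j).testBit b = decide (j < 2 ^ k - 2 ^ b) := by
  obtain ⟨a, c, ha, hc, rfl⟩ := exists_block hj₂
  have h2a : 2 ^ (a + 1) = 2 * 2 ^ a := by ring
  have h2b : 2 ^ (b + 1) = 2 * 2 ^ b := by ring
  have hak : 2 ^ (a + 1) ≤ 2 ^ k := Nat.pow_le_pow_right two_pos ha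
  have hbk : 2 ^ (b + 1) ≤ 2 ^ k := Nat.pow_le_pow_right two_pos hb
  rw [colVal_block ha hc, eq_comm]
  rcases lt_trichotomy a b with hab | rfl | hab
  · have : 2 ^ (a + 1) ≤ 2 ^ b := Nat.pow_le_pow_right two_pos hab
    rw [Nat.testBit_lt_two_pow (by omega), decide_eq_false_iff_not]
    omega
  · rw [Nat.testBit_two_pow_add_eq, Nat.testBit_lt_two_pow hc, Bool.not_false,
      decide_eq_true_iff]
    omega
  · have : 2 ^ (b + 1) ≤ 2 ^ a := Nat.pow_le_pow_right two_pos hab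
    omega

theorem rowWt_eq_count (k n i : ℕ) :
    rowWt k n i = Nat.count (fun j => (colVal k j).testBit (k - i)) n := by
  rw [rowWt, hammingNorm, Nat.count_eq_card_filter_range, ← Nat.Iio_eq_range,
    ← Fin.map_valEmbedding_univ, filter_map, card_map]
  congr 1
  apply filter_congr
  intro j _
  simp [Hrow]

theorem count_testBit_colVal_of_le {k b n : ℕ} (hn : n ≤ 2 ^ k - 2 ^ (b + 1)) :
    Nat.count (fun j => (colVal k j).testBit b) n = Nat.count (fun j => j.testBit b) n :=
  Nat.count_congr fun j hj => by rw [testBit_colVal_of_lt (hj.trans_le hn)]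

theorem count_testBit_colVal_add {k b s : ℕ} (hb : b < k) (hs : s < 2 ^ (b + 1)) :
    Nat.count (fun j => (colVal k j).testBit b) (2 ^ k - 2 ^ (b + 1) + s) =
      2 ^ (k - 1) - 2 ^ b + min s (2 ^ b) := by
  have h2b : 2 ^ (b + 1) = 2 * 2 ^ b := pow_succ' 2 b
  have hbk : 2 ^ (b + 1) ≤ 2 ^ k := Nat.pow_le_pow_right two_pos hb
  rw [Nat.count_add, count_testBit_colVal_of_le le_rfl, Nat.count_testBit_two_pow_sub hb,
    Nat.count_congr (q := (· < 2 ^ b)) fun c hc => ?_, Nat.count_lt_eq_min]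
  rw [testBit_colVal_of_le hb (Nat.le_add_right _ _) (by omega), decide_eq_true_iff]
  omega

theorem count_testBit_colVal_of_two_pow_sub_le {k b n : ℕ} (hb : b < k)
    (h₁ : 2 ^ k - 2 ^ b ≤ n) (h₂ : n < 2 ^ k) :
    Nat.count (fun j => (colVal k j).testBit b) n = 2 ^ (k - 1) := by
  have h2b : 2 ^ (b + 1) = 2 * 2 ^ b := pow_succ' 2 b
  have hbk : 2 ^ (b + 1) ≤ 2 ^ k := Nat.pow_le_pow_right two_pos hb
  have hb' : 2 ^ b ≤ 2 ^ (k - 1) := Nat.pow_le_pow_right two_pos (by omega)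
  obtain ⟨s, rfl⟩ : ∃ s, n = 2 ^ k - 2 ^ (b + 1) + s := ⟨n - (2 ^ k - 2 ^ (b + 1)), by omega⟩
  have hs : 2 ^ b ≤ s := by omega
  rw [count_testBit_colVal_add hb (by omega), min_eq_right hs]
  omega

theorem count_testBit_colVal_of_le_two_pow_sub {k b n : ℕ} (hb : b < k)
    (h₁ : 2 ^ k - 2 ^ (b + 1) ≤ n) (h₂ : n ≤ 2 ^ k - 2 ^ b) :
    Nat.count (fun j => (colVal k j).testBit b) n = n + 2 ^ b - 2 ^ (k - 1) := by
  have : 0 < 2 ^ b := by positivity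
  have hb' : 2 ^ b ≤ 2 ^ (k - 1) := Nat.pow_le_pow_right two_pos (by omega)
  have h2b : 2 ^ (b + 1) = 2 * 2 ^ b := pow_succ' 2 b
  have hbk : 2 ^ (b + 1) ≤ 2 ^ k := Nat.pow_le_pow_right two_pos hb
  have h2k : 2 ^ k = 2 * 2 ^ (k - 1) := (mul_pow_sub_one (by omega) 2).symm
  obtain ⟨s, rfl⟩ : ∃ s, n = 2 ^ k - 2 ^ (b + 1) + s := ⟨n - (2 ^ k - 2 ^ (b + 1)), by omega⟩
  have hs : s ≤ 2 ^ b := by omega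
  rw [count_testBit_colVal_add hb (by omega), min_eq_left hs]
  omega

theorem stmt1_general (k m n : ℕ) (hm1 : 1 ≤ m) (hm2 : m ≤ k - 1)
    (hn1 : 2 ^ k - 2 ^ (k - m) < n) (hn2 : n ≤ 2 ^ k - 2 ^ (k - m - 1)) :
    (∀ i, 1 ≤ i → i ≤ m → rowWt k n i = 2 ^ (k - 1)) ∧
    rowWt k n (m + 1) = n - 2 ^ (k - 1) + 2 ^ (k - m - 1) ∧
    (∀ i, m + 2 ≤ i → i ≤ k →
      (alphaBit k n i = false →
        rowWt k n i = 2 ^ (k - i) * ((n - 1) / 2 ^ (k - i + 1))) ∧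
      (alphaBit k n i = true →
        rowWt k n i = n - 2 ^ (k - i) * ((n - 1) / 2 ^ (k - i + 1)) - 2 ^ (k - i))) := by
  have hpos : 0 < 2 ^ (k - m - 1) := by positivity
  refine ⟨fun i hi₁ hi₂ => ?_, ?_, fun i hi₁ hi₂ => ?_⟩
  · have : 2 ^ (k - m) ≤ 2 ^ (k - i) := Nat.pow_le_pow_right two_pos (by omega)
    rw [rowWt_eq_count, count_testBit_colVal_of_two_pow_sub_le (by omega) (by omega) (by omega)]
  · have hk' : k - m = k - m - 1 + 1 := by omega
    have h2a : 2 ^ (k - m) = 2 * 2 ^ (k - m - 1) := (mul_pow_sub_one (by omega) 2).symm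
    have h2k : 2 ^ k = 2 * 2 ^ (k - 1) := (mul_pow_sub_one (by omega) 2).symm
    have : 2 ^ (k - m) ≤ 2 ^ (k - 1) := Nat.pow_le_pow_right two_pos (by omega)
    rw [rowWt_eq_count, show k - (m + 1) = k - m - 1 by omega,
      count_testBit_colVal_of_le_two_pow_sub (by omega) (hk' ▸ hn1.le) hn2]
    omega
  · have : 2 ^ (k - i + 1) ≤ 2 ^ (k - m - 1) := Nat.pow_le_pow_right two_pos (by omega)
    have hn : n ≤ 2 ^ k - 2 ^ (k - i + 1) := by omega
    have hα : alphaBit k n i = (n - 1).testBit (k - i) := testBit_colVal_of_lt (by omega)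
    rw [rowWt_eq_count, count_testBit_colVal_of_le hn, Nat.count_testBit_of_pos _ (by omega), ← hα]
    constructor <;> intro h <;> simp [h]

/-- Weights of the rows of `H_k(n)` for
`2^k - 2^(k-m) < n ≤ 2^k - 2^(k-m-1)`. -/
theorem stmt1 (k m n : ℕ) (hk : 2 ≤ k) (hm1 : 1 ≤ m) (hm2 : m ≤ k - 1)
    (hn1 : 2 ^ k - 2 ^ (k - m) < n) (hn2 : n ≤ 2 ^ k - 2 ^ (k - m - 1)) :
    (∀ i, 1 ≤ i → i ≤ m → rowWt k n i = 2 ^ (k - 1)) ∧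
    rowWt k n (m + 1) = n - 2 ^ (k - 1) + 2 ^ (k - m - 1) ∧
    (∀ i, m + 2 ≤ i → i ≤ k →
      (alphaBit k n i = false →
        rowWt k n i = 2 ^ (k - i) * ((n - 1) / 2 ^ (k - i + 1))) ∧
      (alphaBit k n i = true →
        rowWt k n i = n - 2 ^ (k - i) * ((n - 1) / 2 ^ (k - i + 1)) - 2 ^ (k - i))) :=
  stmt1_general k m n hm1 hm2 hn1 hn2
end

section
/- For every real x with 0 < x < 1/2, the binary entropy function satisfies h(x) < 1 − (1−2x)²/(2 ln 2) and h(x) > 1 − (1−2x)²/(2 ln 2) − ((ln 2 − 1/2)/ln 2)·(1−2x)⁴. -/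
open Finset

noncomputable def fAux (y : ℝ) : ℝ :=
  ((1 - y) * Real.log (1 - y) + (1 + y) * Real.log (1 + y)) / 2

noncomputable def tAux (n : ℕ) : ℝ := 1 / (2 * n + 1) - 1 / (2 * n + 2)

lemma tAux_pos (n : ℕ) : 0 < tAux n := by
  have h1 : (0:ℝ) < 2 * n + 1 := by positivity
  have h2 : (0:ℝ) < 2 * n + 2 := by positivity
  have : (1:ℝ) / (2 * n + 2) < 1 / (2 * n + 1) :=
    one_div_lt_one_div_of_lt h1 (by linarith)
  simpa [tAux, sub_pos] using this

lemma tAux_summable : Summable tAux := by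
  have hs : Summable (fun n : ℕ => 1 / ((n : ℝ) + 1) ^ 2) := by
    have := (summable_nat_add_iff (f := fun n : ℕ => 1 / (n : ℝ) ^ 2) 1).2
      (Real.summable_one_div_nat_pow.2 one_lt_two)
    simpa using this
  refine Summable.of_nonneg_of_le (fun n => (tAux_pos n).le) (fun n => ?_) hs
  have h1 : (0:ℝ) < 2 * n + 1 := by positivity
  have h2 : (0:ℝ) < 2 * n + 2 := by positivity
  have he : tAux n = 1 / ((2 * n + 1) * (2 * n + 2)) := by
    unfold tAux; field_simp; ring
  rw [he]
  apply one_div_le_one_div_of_le (by positivity)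
  nlinarith [sq_nonneg ((n:ℝ))]

lemma hasSum_fAux {y : ℝ} (hy : |y| < 1) :
    HasSum (fun n : ℕ => y ^ (2 * n + 2) * tAux n) (fAux y) := by
  have hy1 : -1 < y := neg_lt_of_abs_lt hy
  have hy2 : y < 1 := lt_of_abs_lt hy
  have hysq : |y ^ 2| < 1 := by
    rw [abs_pow]
    exact pow_lt_one₀ (abs_nonneg y) hy two_ne_zero
  have h1 := (Real.hasSum_pow_div_log_of_abs_lt_one hysq).mul_left (-(1/2))
  have h2 := (Real.hasSum_log_sub_log_of_abs_lt_one hy).mul_left (y / 2)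
  have h3 := h2.add h1
  have hne1 : (1 : ℝ) - y ≠ 0 := by linarith
  have hne2 : (1 : ℝ) + y ≠ 0 := by linarith
  have hfun : (fun n : ℕ => y ^ (2 * n + 2) * tAux n) =
      (fun n : ℕ => y / 2 * (2 * (1 / (2 * (n:ℝ) + 1)) * y ^ (2 * n + 1)) +
        -(1/2) * ((y ^ 2) ^ (n + 1) / ((n:ℝ) + 1))) := by
    funext n
    have hpow : (y ^ 2) ^ (n + 1) = y ^ (2 * n + 2) := by
      rw [← pow_mul]; ring_nf
    rw [hpow]
    have hc1 : ((2:ℝ) * n + 1) ≠ 0 := by positivity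
    have hc2 : ((n:ℝ) + 1) ≠ 0 := by positivity
    unfold tAux
    field_simp
    ring
  have hval : fAux y = y / 2 * (Real.log (1 + y) - Real.log (1 - y)) +
      -(1/2) * -Real.log (1 - y ^ 2) := by
    have he : (1 : ℝ) - y ^ 2 = (1 - y) * (1 + y) := by ring
    rw [he, Real.log_mul hne1 hne2]
    unfold fAux
    ring
  rw [hfun, hval]
  exact h3

lemma fAux_gt {y : ℝ} (hy0 : 0 < y) (hy1 : y < 1) : y ^ 2 / 2 < fAux y := by
  have hs := hasSum_fAux (by rw [abs_of_pos hy0]; exact hy1)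
  have hnn : ∀ i ∉ Finset.range 2, 0 ≤ y ^ (2 * i + 2) * tAux i := by
    intro i _
    have := tAux_pos i
    positivity
  have hle := Summable.sum_le_tsum (Finset.range 2) hnn hs.summable
  rw [hs.tsum_eq] at hle
  have h0 : tAux 0 = 1 / 2 := by norm_num [tAux]
  have h1 : tAux 1 = 1 / 12 := by norm_num [tAux]
  simp [Finset.sum_range_succ, h0, h1] at hle
  nlinarith [pow_pos hy0 4, hle]

noncomputable def Gaux (z : ℝ) : ℝ := (fAux z - z ^ 2 / 2) / z ^ 4

lemma hasSum_Gaux {y : ℝ} (hy0 : 0 < y) (hy1 : y < 1) :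
    HasSum (fun n : ℕ => y ^ (2 * n) * tAux (n + 1)) (Gaux y) := by
  have hs := hasSum_fAux (by rw [abs_of_pos hy0]; exact hy1)
  have hshift := (hasSum_nat_add_iff' (f := fun n : ℕ => y ^ (2 * n + 2) * tAux n) 1).2 hs
  simp only [Finset.sum_range_one, Nat.mul_zero, Nat.zero_add] at hshift
  have hshift : HasSum (fun n : ℕ => y ^ (2 * (n + 1) + 2) * tAux (n + 1))
      (fAux y - y ^ 2 * tAux 0) := by
    convert hshift using 2 <;> ring_nf
  have hdiv := hshift.div_const (y ^ 4)
  have hyne : y ≠ 0 := hy0.ne'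
  have hfun : (fun n : ℕ => y ^ (2 * n) * tAux (n + 1)) =
      (fun n : ℕ => y ^ (2 * (n + 1) + 2) * tAux (n + 1) / y ^ 4) := by
    funext n
    have : y ^ (2 * (n + 1) + 2) = y ^ (2 * n) * y ^ 4 := by
      rw [← pow_add]; ring_nf
    rw [this]
    field_simp
  have h0 : tAux 0 = 1 / 2 := by norm_num [tAux]
  rw [hfun]
  have : fAux y - y ^ 2 * tAux 0 = fAux y - y ^ 2 / 2 := by rw [h0]; ring
  rw [this] at hdiv
  exact hdiv

lemma Gaux_mono {a b : ℝ} (ha : 0 < a) (hab : a < b) (hb : b < 1) : Gaux a < Gaux b := by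
  have hsa := hasSum_Gaux ha (hab.trans hb)
  have hsb := hasSum_Gaux (ha.trans hab) hb
  rw [← hsa.tsum_eq, ← hsb.tsum_eq]
  refine Summable.tsum_lt_tsum_of_nonneg (fun n => ?_) (fun n => ?_) (i := 1) ?_ hsb.summable
  · have := tAux_pos (n + 1); positivity
  · exact mul_le_mul_of_nonneg_right
      (pow_le_pow_left₀ ha.le hab.le _) (tAux_pos (n + 1)).le
  · have h2 : a ^ (2 * 1) < b ^ (2 * 1) := by
      simpa using pow_lt_pow_left₀ hab ha.le (by norm_num : 2 * 1 ≠ 0)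
    exact mul_lt_mul_of_pos_right h2 (tAux_pos 2)

lemma Gaux_tendsto : Filter.Tendsto Gaux (nhds 1) (nhds (Real.log 2 - 1 / 2)) := by
  have hc1 : Continuous fun y : ℝ => (1 - y) * Real.log (1 - y) :=
    Real.continuous_mul_log.comp (by continuity)
  have hc2 : Continuous fun y : ℝ => (1 + y) * Real.log (1 + y) :=
    Real.continuous_mul_log.comp (by continuity)
  have hf : Continuous fAux := ((hc1.add hc2).div_const 2)
  have hG : ContinuousAt Gaux 1 := by
    apply ContinuousAt.div
    · exact (hf.sub (by continuity)).continuousAt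
    · exact (by continuity : Continuous fun z : ℝ => z ^ 4).continuousAt
    · norm_num
  have hval : Gaux 1 = Real.log 2 - 1 / 2 := by
    unfold Gaux fAux
    norm_num
  rw [← hval]
  exact hG.tendsto

lemma fAux_lt {y : ℝ} (hy0 : 0 < y) (hy1 : y < 1) :
    fAux y < y ^ 2 / 2 + (Real.log 2 - 1 / 2) * y ^ 4 := by
  set m : ℝ := (y + 1) / 2 with hm
  have hm0 : 0 < m := by rw [hm]; linarith
  have hym : y < m := by rw [hm]; linarith
  have hm1 : m < 1 := by rw [hm]; linarith
  have h1 : Gaux y < Gaux m := Gaux_mono hy0 hym hm1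
  have h2 : Gaux m ≤ Real.log 2 - 1 / 2 := by
    have hten : Filter.Tendsto Gaux (nhdsWithin (1:ℝ) (Set.Iio 1))
        (nhds (Real.log 2 - 1 / 2)) := Gaux_tendsto.mono_left nhdsWithin_le_nhds
    refine ge_of_tendsto hten ?_
    filter_upwards [Ioo_mem_nhdsLT_of_mem (Set.mem_Ioc.2 ⟨hm1, le_refl 1⟩)] with z hz
    exact (Gaux_mono hm0 hz.1 hz.2).le
  have hG : Gaux y < Real.log 2 - 1 / 2 := lt_of_lt_of_le h1 h2
  have hy4 : (0:ℝ) < y ^ 4 := by positivity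
  have := mul_lt_mul_of_pos_right hG hy4
  rw [Gaux, div_mul_cancel₀ _ hy4.ne'] at this
  linarith

lemma binEnt_eq {y : ℝ} (hy0 : 0 < y) (hy1 : y < 1) :
    binEnt ((1 - y) / 2) = (Real.log 2 - fAux y) / Real.log 2 := by
  have hL : (0:ℝ) < Real.log 2 := Real.log_pos one_lt_two
  have h1 : Real.log ((1 - y) / 2) = Real.log (1 - y) - Real.log 2 :=
    Real.log_div (by linarith) two_ne_zero
  have h2 : (1 : ℝ) - (1 - y) / 2 = (1 + y) / 2 := by ring
  have h3 : Real.log ((1 + y) / 2) = Real.log (1 + y) - Real.log 2 :=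
    Real.log_div (by linarith) two_ne_zero
  unfold binEnt fAux
  rw [Real.logb, Real.logb, h1, h2, h3]
  field_simp
  ring


/-- Quadratic/quartic bounds on the binary entropy function:
for `0 < x < 1/2`,
`1 - (1-2x)²/(2 ln 2) - ((ln 2 - 1/2)/ln 2)·(1-2x)⁴ < h(x) < 1 - (1-2x)²/(2 ln 2)`. -/
theorem stmt10 (x : ℝ) (hx1 : 0 < x) (hx2 : x < 1 / 2) :
    binEnt x < 1 - (1 - 2 * x) ^ 2 / (2 * Real.log 2) ∧
    1 - (1 - 2 * x) ^ 2 / (2 * Real.log 2) -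
        (Real.log 2 - 1 / 2) / Real.log 2 * (1 - 2 * x) ^ 4 < binEnt x := by
  have hy0 : 0 < 1 - 2 * x := by linarith
  have hy1 : 1 - 2 * x < 1 := by linarith
  have hL : (0:ℝ) < Real.log 2 := Real.log_pos one_lt_two
  have hb := binEnt_eq hy0 hy1
  have hxe : (1 - (1 - 2 * x)) / 2 = x := by ring
  rw [hxe] at hb
  have hfg := fAux_gt hy0 hy1
  have hfl := fAux_lt hy0 hy1
  set y := 1 - 2 * x
  constructor
  · rw [hb, div_lt_iff₀ hL]
    have e1 : (1 - y ^ 2 / (2 * Real.log 2)) * Real.log 2 = Real.log 2 - y ^ 2 / 2 := by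
      field_simp
    rw [e1]
    linarith
  · rw [hb, lt_div_iff₀ hL]
    have e2 : (1 - y ^ 2 / (2 * Real.log 2) -
        (Real.log 2 - 1 / 2) / Real.log 2 * y ^ 4) * Real.log 2
        = Real.log 2 - y ^ 2 / 2 - (Real.log 2 - 1 / 2) * y ^ 4 := by
      field_simp
    rw [e2]
    linarith
end

section
/- For every integer m ≥ 1, writing u_m = 2^{m+3}·U_m·ln 2 − 1, one has 3/(2^{m+2} − 3) < u_m < 3/(2^{m+2} − 3) + (2 ln 2 − 1)·2^{m+2}/(2^{m+2} − 3)³. -/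
open Finset

set_option maxHeartbeats 1000000 in
lemma core (x : ℝ) (hx0 : 0 < x) (hx : x ≤ 1/5) :
    x^2 < (1+x)*Real.log (1+x) + (1-x)*Real.log (1-x) ∧
    (1+x)*Real.log (1+x) + (1-x)*Real.log (1-x) < x^2 + (2*Real.log 2 - 1)*x^4 := by
  have hx1 : |x| < 1 := by rw [abs_of_pos hx0]; linarith
  have hx1' : |(-x)| < 1 := by rwa [abs_neg]
  have H1 := Real.abs_log_sub_add_sum_range_le hx1 6
  have H2 := Real.abs_log_sub_add_sum_range_le hx1' 6
  rw [abs_of_pos hx0] at H1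
  rw [abs_neg, abs_of_pos hx0] at H2
  simp only [Finset.sum_range_succ, Finset.sum_range_zero] at H1 H2
  norm_num at H1 H2
  ring_nf at H1 H2
  rw [abs_le] at H1 H2
  obtain ⟨H1l, H1r⟩ := H1
  obtain ⟨H2l, H2r⟩ := H2
  have h1x : (0:ℝ) < 1 - x := by linarith
  have hE : x^7/(1-x) ≤ 2*x^7 := by
    rw [div_le_iff₀ h1x]
    nlinarith [pow_pos hx0 7]
  have hEpos : 0 ≤ x^7/(1-x) := by positivity
  rw [div_eq_mul_inv] at hE hEpos
  have hA_lo : (x - x^2/2 + x^3/3 - x^4/4 + x^5/5 - x^6/6) - 2*x^7 ≤ Real.log (1+x) := by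
    nlinarith [H2l]
  have hA_hi : Real.log (1+x) ≤ (x - x^2/2 + x^3/3 - x^4/4 + x^5/5 - x^6/6) + 2*x^7 := by
    nlinarith [H2r]
  have hB_lo : (-x - x^2/2 - x^3/3 - x^4/4 - x^5/5 - x^6/6) - 2*x^7 ≤ Real.log (1-x) := by
    nlinarith [H1l]
  have hB_hi : Real.log (1-x) ≤ (-x - x^2/2 - x^3/3 - x^4/4 - x^5/5 - x^6/6) + 2*x^7 := by
    nlinarith [H1r]
  have hlog2 := Real.log_two_gt_d9
  have P1 := mul_le_mul_of_nonneg_left hA_lo (by linarith : (0:ℝ) ≤ 1+x)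
  have P2 := mul_le_mul_of_nonneg_left hB_lo (by linarith : (0:ℝ) ≤ 1-x)
  have Q1 := mul_le_mul_of_nonneg_left hA_hi (by linarith : (0:ℝ) ≤ 1+x)
  have Q2 := mul_le_mul_of_nonneg_left hB_hi (by linarith : (0:ℝ) ≤ 1-x)
  have key_lo : x^2 + x^4/6 + x^6/15 - 4*x^7 ≤
      (1+x)*Real.log (1+x) + (1-x)*Real.log (1-x) := by nlinarith [add_le_add P1 P2]
  have key_hi : (1+x)*Real.log (1+x) + (1-x)*Real.log (1-x) ≤
      x^2 + x^4/6 + x^6/15 + 4*x^7 := by nlinarith [add_le_add Q1 Q2]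
  have h4 : (0:ℝ) < x^4 := pow_pos hx0 4
  have h7 : x^7 ≤ x^6/5 := by nlinarith [pow_pos hx0 6]
  have h6 : x^6 ≤ x^4/25 := by nlinarith [pow_pos hx0 4, sq_nonneg x, pow_pos hx0 5]
  have hL : (0.38:ℝ)*x^4 ≤ (2*Real.log 2 - 1)*x^4 := by
    apply mul_le_mul_of_nonneg_right _ (le_of_lt h4)
    linarith
  constructor
  · linarith
  · linarith

lemma fbound (N : ℝ) (hN : 5 ≤ N) :
    1/N < (N+1)*(Real.log (N+1) - Real.log N) + (N-1)*(Real.log (N-1) - Real.log N) ∧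
    (N+1)*(Real.log (N+1) - Real.log N) + (N-1)*(Real.log (N-1) - Real.log N)
      < 1/N + (2*Real.log 2 - 1)/N^3 := by
  have hN0 : (0:ℝ) < N := by linarith
  have hx0 : (0:ℝ) < 1/N := by positivity
  have hx : (1:ℝ)/N ≤ 1/5 := by
    rw [div_le_div_iff₀ hN0 (by norm_num)]; linarith
  obtain ⟨hg1, hg2⟩ := core (1/N) hx0 hx
  have e1 : Real.log (1 + 1/N) = Real.log (N+1) - Real.log N := by
    rw [show (1:ℝ) + 1/N = (N+1)/N by field_simp,
      Real.log_div (by linarith) (by linarith)]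
  have e2 : Real.log (1 - 1/N) = Real.log (N-1) - Real.log N := by
    rw [show (1:ℝ) - 1/N = (N-1)/N by field_simp,
      Real.log_div (by linarith) (by linarith)]
  rw [e1, e2] at hg1 hg2
  constructor
  · have h := mul_lt_mul_of_pos_left hg1 hN0
    have eL : N * (1/N)^2 = 1/N := by field_simp; try ring
    have eR : N * ((1+1/N)*(Real.log (N+1) - Real.log N) + (1-1/N)*(Real.log (N-1) - Real.log N))
        = (N+1)*(Real.log (N+1) - Real.log N) + (N-1)*(Real.log (N-1) - Real.log N) := by
      field_simp; try ring
    rw [eL, eR] at h; exact h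
  · have h := mul_lt_mul_of_pos_left hg2 hN0
    have eL : N * ((1/N)^2 + (2*Real.log 2 - 1)*(1/N)^4) = 1/N + (2*Real.log 2 - 1)/N^3 := by
      field_simp; try ring
    have eR : N * ((1+1/N)*(Real.log (N+1) - Real.log N) + (1-1/N)*(Real.log (N-1) - Real.log N))
        = (N+1)*(Real.log (N+1) - Real.log N) + (N-1)*(Real.log (N-1) - Real.log N) := by
      field_simp; try ring
    rw [eL, eR] at h; exact h

lemma entropy_eq (N : ℝ) (hN : 5 ≤ N) :
    2*N*(1 - binEnt ((N-1)/(2*N)))*Real.log 2 =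
      (N+1)*(Real.log (N+1) - Real.log N) + (N-1)*(Real.log (N-1) - Real.log N) := by
  have hN0 : (0:ℝ) < N := by linarith
  have h1 : 1 - (N-1)/(2*N) = (N+1)/(2*N) := by field_simp; try ring
  have hl2 : Real.log 2 ≠ 0 := ne_of_gt (Real.log_pos one_lt_two)
  rw [binEnt, h1, Real.logb, Real.logb,
    Real.log_div (by linarith : N-1 ≠ 0) (by positivity : 2*N ≠ 0),
    Real.log_div (by linarith : N+1 ≠ 0) (by positivity : 2*N ≠ 0),
    Real.log_mul (by norm_num) (ne_of_gt hN0)]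
  field_simp
  ring

/-- For `m ≥ 1`, writing `u_m = 2^(m+3)·U_m·ln 2 - 1`, one has
`3/(2^(m+2) - 3) < u_m < 3/(2^(m+2) - 3) + (2 ln 2 - 1)·2^(m+2)/(2^(m+2) - 3)³`. -/
theorem stmt11 (m : ℕ) (hm : 1 ≤ m) :
    3 / ((2 : ℝ) ^ (m + 2) - 3) < (2 : ℝ) ^ (m + 3) * Ufun m * Real.log 2 - 1 ∧
    (2 : ℝ) ^ (m + 3) * Ufun m * Real.log 2 - 1 <
      3 / ((2 : ℝ) ^ (m + 2) - 3) +
        (2 * Real.log 2 - 1) * (2 : ℝ) ^ (m + 2) / ((2 : ℝ) ^ (m + 2) - 3) ^ 3 := by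
  have hp : (8:ℝ) ≤ (2:ℝ)^(m+2) := by
    calc (8:ℝ) = 2^3 := by norm_num
    _ ≤ 2^(m+2) := pow_le_pow_right₀ one_le_two (by omega)
  set N : ℝ := (2:ℝ)^(m+2) - 3 with hNdef
  have hN5 : (5:ℝ) ≤ N := by rw [hNdef]; linarith
  have hN0 : (0:ℝ) < N := by linarith
  have hsum : (2:ℝ)^(m+2) = N + 3 := by rw [hNdef]; ring
  have hz : ((2:ℝ)^(m+1)-2)/((2:ℝ)^(m+2)-3) = (N-1)/(2*N) := by
    have h2 : (2:ℝ)^(m+2) = 2^(m+1)*2 := by rw [pow_succ]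
    have hQ : (5:ℝ) ≤ 2^(m+1)*2 - 3 := by rw [← h2]; linarith
    rw [hNdef, h2]
    rw [div_eq_div_iff (by linarith) (by nlinarith)]
    ring
  have hUeq : Ufun m = N * (1 - binEnt ((N-1)/(2*N))) := by
    rw [Ufun, hz, ← hNdef]
  have h3 : (2:ℝ)^(m+3) = 2*(N+3) := by
    rw [pow_succ, hsum]; ring
  have hU : (2:ℝ)^(m+3) * Ufun m * Real.log 2
      = (N+3) * ((N+1)*(Real.log (N+1) - Real.log N) + (N-1)*(Real.log (N-1) - Real.log N)) := by
    rw [h3, hUeq, ← entropy_eq N hN5]; ring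
  obtain ⟨hf1, hf2⟩ := fbound N hN5
  have hN3 : (0:ℝ) < N + 3 := by linarith
  rw [hsum, hU]
  constructor
  · have h := mul_lt_mul_of_pos_left hf1 hN3
    have e : (N+3)*(1/N) = 3/N + 1 := by field_simp; try ring
    rw [e] at h; linarith
  · have h := mul_lt_mul_of_pos_left hf2 hN3
    have e : (N+3)*(1/N + (2*Real.log 2 - 1)/N^3)
        = 3/N + 1 + (2*Real.log 2 - 1)*(N+3)/N^3 := by field_simp; try ring
    rw [e] at h; linarith
end

section
/- For all integers m ≥ 1 and k ≥ m+1, one has k − m ≠ 2^{k−m−2}·U_m. (Equivalently, the unique real root κ(m) ≥ m+1 of the equation x − m = 2^{x−m−2}·U_m is never an integer.) -/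
open Finset

/-!
Write `a = 2^(m+1) - 2` and `c = 2a + 1 = 2^(m+2) - 3`, so that
`U_m = c + log₂ (a^a (a+1)^(a+1) / c^c)`. If `d = k - m` satisfied `d = 2^(d-2) U_m`, that
logarithm would be `-e / 2^d` with `e = c 2^d - 4d > 0` (as `d < 2^d` and `c ≥ 5`), i.e.
`(a^a (a+1)^(a+1))^(2^d) · 2^e = (c^c)^(2^d)`: even on the left, odd on the right.
-/

open Real

lemma mul_one_sub_binEnt_div {a b : ℝ} (ha : 0 < a) (hb : 0 < b) :
    (a + b) * (1 - binEnt (a / (a + b))) =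
      a + b + (a * logb 2 a + b * logb 2 b - (a + b) * logb 2 (a + b)) := by
  have hc : a + b ≠ 0 := by positivity
  have hbc : 1 - a / (a + b) = b / (a + b) := by field_simp; ring
  rw [binEnt, hbc, logb_div ha.ne' hc, logb_div hb.ne' hc]
  field_simp
  ring

lemma natCast_mul_one_sub_binEnt_div {a b : ℕ} (ha : 0 < a) (hb : 0 < b) :
    ((a + b : ℕ) : ℝ) * (1 - binEnt (a / (a + b : ℕ))) =
      (a + b : ℕ) + logb 2 ((a ^ a * b ^ b : ℕ) / ((a + b) ^ (a + b) : ℕ)) := by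
  push_cast
  rw [mul_one_sub_binEnt_div (by exact_mod_cast ha) (by exact_mod_cast hb),
    logb_div (by positivity) (by positivity), logb_mul (by positivity) (by positivity),
    logb_pow, logb_pow, logb_pow]
  push_cast
  ring

lemma logb_two_div_ne_of_neg {X Y N : ℕ} {r : ℤ} (hX : X ≠ 0) (hY : Odd Y) (hN : N ≠ 0)
    (hr : r < 0) : logb 2 ((X : ℝ) / Y) ≠ r / N := by
  obtain ⟨e, rfl⟩ := Int.exists_eq_neg_ofNat hr.le
  have he : e ≠ 0 := by omega
  intro h
  have hY0 : (Y : ℝ) ≠ 0 := by exact_mod_cast hY.pos.ne'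
  have hXY : (0 : ℝ) < X / Y := by positivity
  have hpow : ((X : ℝ) / Y) ^ N = (2 : ℝ) ^ (-(e : ℝ)) := by
    rw [← rpow_logb (b := 2) (by norm_num) (by norm_num) hXY, h, ← rpow_natCast,
      ← rpow_mul (by norm_num)]
    congr 1
    push_cast
    field_simp
  rw [rpow_neg (by norm_num), rpow_natCast, div_pow, div_eq_iff (by positivity)] at hpow
  have hnat : X ^ N * 2 ^ e = Y ^ N := by
    have : (X : ℝ) ^ N * 2 ^ e = Y ^ N := by
      rw [hpow]; field_simp
    exact_mod_cast this
  have heven : Even (Y ^ N) := hnat ▸ (Nat.even_pow.mpr ⟨even_two, he⟩).mul_left _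
  exact Nat.not_even_iff_odd.mpr hY.pow heven

lemma eq_div_two_pow_of_natCast_eq_zpow_mul {d c : ℕ} {L : ℝ}
    (h : (d : ℝ) = 2 ^ ((d : ℤ) - 2) * (c + L)) :
    L = ((4 * d - c * 2 ^ d : ℤ) : ℝ) / (2 ^ d : ℕ) := by
  have h4 : (2 : ℝ) ^ ((d : ℤ) - 2) * 4 = 2 ^ d := by
    rw [← zpow_natCast, show (4 : ℝ) = 2 ^ (2 : ℤ) by norm_num, ← zpow_add₀ two_ne_zero]
    ring_nf
  push_cast
  rw [eq_div_iff (by positivity), ← h4]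
  linear_combination -4 * h

/-- For all integers `m ≥ 1` and `k ≥ m + 1`,
`k - m ≠ 2^(k-m-2)·U_m`; i.e. the root `κ(m)` of `x - m = 2^(x-m-2)·U_m` is
never an integer. -/
theorem stmt12 (m k : ℕ) (hm : 1 ≤ m) (hk : m + 1 ≤ k) :
    ((k : ℝ) - (m : ℝ)) ≠ (2 : ℝ) ^ ((k : ℤ) - (m : ℤ) - 2) * Ufun m := by
  obtain ⟨d, rfl⟩ : ∃ d, k = m + d := ⟨k - m, by omega⟩
  set a := 2 ^ (m + 1) - 2 with ha
  have ha2 : 2 ≤ a := by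
    have := Nat.pow_le_pow_right two_pos (show 2 ≤ m + 1 by omega)
    omega
  have hU : Ufun m = ((a + (a + 1) : ℕ) : ℝ) * (1 - binEnt (a / (a + (a + 1) : ℕ))) := by
    have h2a : (a : ℝ) = 2 ^ (m + 1) - 2 := by
      rw [ha, Nat.cast_sub (by omega)]
      push_cast
      ring
    have h2c : ((a + (a + 1) : ℕ) : ℝ) = 2 ^ (m + 2) - 3 := by
      push_cast
      rw [h2a]
      ring
    rw [Ufun, h2c, h2a]
  rw [hU, natCast_mul_one_sub_binEnt_div (by omega) (by omega)]
  intro h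
  have hd : (d : ℝ) = 2 ^ ((d : ℤ) - 2) * ((a + (a + 1) : ℕ) +
      logb 2 ((a ^ a * (a + 1) ^ (a + 1) : ℕ) / ((a + (a + 1)) ^ (a + (a + 1)) : ℕ))) := by
    push_cast [add_sub_cancel_left] at h ⊢
    exact h
  have hneg : 4 * (d : ℤ) - (a + (a + 1) : ℕ) * 2 ^ d < 0 := by
    have : (d : ℤ) < 2 ^ d := by exact_mod_cast Nat.lt_two_pow_self
    push_cast
    nlinarith
  exact logb_two_div_ne_of_neg (by positivity) (show Odd (a + (a + 1)) from ⟨a, by ring⟩).pow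
    (by positivity) hneg (eq_div_two_pow_of_natCast_eq_zpow_mul hd)
end
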